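/- arXiv:2011.08629 — 2 statements merged into one kernel-verified Lean document; each statement's English description precedes it below -/
import Mathlib

section
/- Let $X$ be a uniformly convex normed linear space with modulus of convexity $\delta$. Let $\varepsilon > 0$, $d > 0$, $\lambda \in [0,1]$, and suppose $\phi, \psi \in X$ satisfy $\|\psi\| \le \|\phi\| \le d$ and $\|\phi - \psi\| \ge \varepsilon$. Then $\|(1-\lambda)\phi + \lambda\psi\| \le \|\phi\| \big(1 - 2\delta(\varepsilon/d) \min\{\lambda, 1-\lambda\}\big)$. -/
/-!
Rescaling `φ` and `ψ` by `‖φ‖⁻¹` into the unit ball, uniform convexity bounds the midpoint: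
`‖φ + ψ‖ ≤ 2‖φ‖(1 - δ(ε/d))`. With `m = min λ (1 - λ)`, the combination splits as
`(1 - λ - m) • φ + (λ - m) • ψ + m • (φ + ψ)` with nonnegative coefficients, and the triangle
inequality turns the midpoint bound into the claimed one.
-/

def IsModulusOfConvexity (X : Type*) [NormedAddCommGroup X] [NormedSpace ℝ X]
    (δ : ℝ → ℝ) : Prop :=
  ∀ ε : ℝ, 0 < ε → ε ≤ 2 → ∀ x y : X,
    ‖x‖ ≤ 1 → ‖y‖ ≤ 1 → ε ≤ ‖x - y‖ → ‖(1 / 2 : ℝ) • (x + y)‖ ≤ 1 - δ ε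

theorem IsModulusOfConvexity.norm_add_le {X : Type*} [NormedAddCommGroup X] [NormedSpace ℝ X]
    {δ : ℝ → ℝ} (hδ : IsModulusOfConvexity X δ) {s η : ℝ} (hs : 0 < s) (hη : 0 < η)
    {x y : X} (hx : ‖x‖ ≤ s) (hy : ‖y‖ ≤ s) (hxy : s * η ≤ ‖x - y‖) :
    ‖x + y‖ ≤ 2 * s * (1 - δ η) := by
  have hη2 : η ≤ 2 := by
    have : ‖x - y‖ ≤ s * 2 := by linarith [norm_sub_le x y]
    exact le_of_mul_le_mul_left (hxy.trans this) hs
  have hnorm_smul (z : X) : ‖s⁻¹ • z‖ = ‖z‖ / s := by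
    rw [norm_smul, Real.norm_of_nonneg (inv_nonneg.2 hs.le), inv_mul_eq_div]
  have hmid := hδ η hη hη2 (s⁻¹ • x) (s⁻¹ • y)
    (by rw [hnorm_smul, div_le_one hs]; exact hx)
    (by rw [hnorm_smul, div_le_one hs]; exact hy)
    (by rw [← smul_sub, hnorm_smul, le_div_iff₀ hs, mul_comm]; exact hxy)
  rw [← smul_add, smul_smul, norm_smul, Real.norm_of_nonneg (by positivity)] at hmid
  calc ‖x + y‖ = 2 * s * (1 / 2 * s⁻¹ * ‖x + y‖) := by field_simp
    _ ≤ 2 * s * (1 - δ η) := by gcongr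

theorem norm_smul_add_smul_le_of_norm_add_le {E : Type*} [SeminormedAddCommGroup E]
    [NormedSpace ℝ E] {x y : E} {t lam : ℝ} (hy : ‖y‖ ≤ ‖x‖)
    (hxy : ‖x + y‖ ≤ 2 * ‖x‖ * (1 - t)) (hlam0 : 0 ≤ lam) (hlam1 : lam ≤ 1) :
    ‖(1 - lam) • x + lam • y‖ ≤ ‖x‖ * (1 - 2 * t * min lam (1 - lam)) := by
  set m := min lam (1 - lam)
  have hm0 : 0 ≤ m := le_min hlam0 (by linarith)
  have hm1 : m ≤ lam := min_le_left _ _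
  have hm2 : m ≤ 1 - lam := min_le_right _ _
  have hsplit : (1 - lam) • x + lam • y = (1 - lam - m) • x + (lam - m) • y + m • (x + y) := by
    module
  rw [hsplit]
  calc ‖(1 - lam - m) • x + (lam - m) • y + m • (x + y)‖
      ≤ ‖(1 - lam - m) • x‖ + ‖(lam - m) • y‖ + ‖m • (x + y)‖ := norm_add₃_le
    _ = (1 - lam - m) * ‖x‖ + (lam - m) * ‖y‖ + m * ‖x + y‖ := by
      rw [norm_smul_of_nonneg (by linarith), norm_smul_of_nonneg (by linarith),
        norm_smul_of_nonneg hm0]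
    _ ≤ (1 - lam - m) * ‖x‖ + (lam - m) * ‖x‖ + m * (2 * ‖x‖ * (1 - t)) := by
      gcongr
    _ = ‖x‖ * (1 - 2 * t * m) := by ring

theorem groetsch_convexity_lemma_general
    {X : Type*} [NormedAddCommGroup X] [NormedSpace ℝ X]
    (δ : ℝ → ℝ)
    (hδconv : ∀ ε : ℝ, 0 < ε → ε ≤ 2 → ∀ x y : X,
      ‖x‖ ≤ 1 → ‖y‖ ≤ 1 → ε ≤ ‖x - y‖ → ‖(1 / 2 : ℝ) • (x + y)‖ ≤ 1 - δ ε)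
    (ε d lam : ℝ) (hε : 0 < ε) (hd : 0 < d) (hlam0 : 0 ≤ lam) (hlam1 : lam ≤ 1)
    (φ ψ : X) (h1 : ‖ψ‖ ≤ ‖φ‖) (h2 : ‖φ‖ ≤ d) (h3 : ε ≤ ‖φ - ψ‖) :
    ‖(1 - lam) • φ + lam • ψ‖ ≤ ‖φ‖ * (1 - 2 * δ (ε / d) * min lam (1 - lam)) := by
  have hφ : 0 < ‖φ‖ := by linarith [norm_sub_le φ ψ]
  have hsep : ‖φ‖ * (ε / d) ≤ ‖φ - ψ‖ := by
    calc ‖φ‖ * (ε / d) ≤ d * (ε / d) := by gcongr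
      _ = ε := by field_simp
      _ ≤ ‖φ - ψ‖ := h3
  have hmid := IsModulusOfConvexity.norm_add_le hδconv hφ (div_pos hε hd) le_rfl h1 hsep
  exact norm_smul_add_smul_le_of_norm_add_le h1 hmid hlam0 hlam1

/-- Groetsch's lemma on uniformly convex spaces. -/
theorem groetsch_convexity_lemma
    {X : Type*} [NormedAddCommGroup X] [NormedSpace ℝ X]
    (δ : ℝ → ℝ)
    (hδconv : ∀ ε : ℝ, 0 < ε → ε ≤ 2 → ∀ x y : X,
      ‖x‖ ≤ 1 → ‖y‖ ≤ 1 → ε ≤ ‖x - y‖ → ‖(1 / 2 : ℝ) • (x + y)‖ ≤ 1 - δ ε)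
    (hδpos : ∀ ε : ℝ, 0 < ε → ε ≤ 2 → 0 < δ ε ∧ δ ε ≤ 1)
    (ε d lam : ℝ) (hε : 0 < ε) (hd : 0 < d) (hlam0 : 0 ≤ lam) (hlam1 : lam ≤ 1)
    (φ ψ : X) (h1 : ‖ψ‖ ≤ ‖φ‖) (h2 : ‖φ‖ ≤ d) (h3 : ε ≤ ‖φ - ψ‖) :
    ‖(1 - lam) • φ + lam • ψ‖ ≤ ‖φ‖ * (1 - 2 * δ (ε / d) * min lam (1 - lam)) :=
  groetsch_convexity_lemma_general δ hδconv ε d lam hε hd hlam0 hlam1 φ ψ h1 h2 h3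
end

section
/- Let $H$ be a Hilbert space and $T : H \to H$ a continuous map satisfying $\|T\varphi\| \le \|\varphi\|$ for all $\varphi$. Let $A$ be a segmenting matrix with diagonal elements $d_k \in [0,1]$ such that $\sum_{k=1}^\infty \min\{d_k, 1-d_k\} = \infty$. Let $\varphi_1 \in H$ and define $\phi_k := \sum_{j=1}^k a_{kj}\varphi_j$, $\varphi_{k+1} := T(\phi_k)$. Then there exists a subsequence $\{\phi_{k_j}\}$ such that $(I - T)\phi_{k_j} \to 0$ strongly. -/
/-!
In an inner product space, `‖(1 - t) x + t y‖² = (1 - t) ‖x‖² + t ‖y‖² - t (1 - t) ‖x - y‖²`.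
Since `‖T x‖ ≤ ‖x‖`, each Mann step therefore lowers `‖x_k‖²` by at least
`d_k (1 - d_k) ‖x_k - T x_k‖²`, so these quantities are summable. As
`min (d_k, 1 - d_k) ≤ 2 d_k (1 - d_k)` and `∑ min (d_k, 1 - d_k) = ∞`, the residuals
`‖x_k - T x_k‖` cannot stay bounded away from `0`: `0` is a cluster point of them.
-/

open Filter Finset

theorem norm_one_sub_smul_add_smul_sq {H : Type*} [NormedAddCommGroup H]
    [InnerProductSpace ℝ H] (x y : H) (t : ℝ) :
    ‖(1 - t) • x + t • y‖ ^ 2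
      = (1 - t) * ‖x‖ ^ 2 + t * ‖y‖ ^ 2 - t * (1 - t) * ‖x - y‖ ^ 2 := by
  rw [norm_add_sq_real, norm_sub_sq_real, norm_smul, norm_smul, real_inner_smul_left,
    real_inner_smul_right]
  simp only [Real.norm_eq_abs, mul_pow, sq_abs]
  ring

theorem min_le_two_mul_mul_one_sub {t : ℝ} (ht : t ∈ Set.Icc (0 : ℝ) 1) :
    min t (1 - t) ≤ 2 * (t * (1 - t)) := by
  obtain ⟨ht0, ht1⟩ := ht
  rcases le_total t (1 - t) with h | h
  · rw [min_eq_left h]; nlinarith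
  · rw [min_eq_right h]; nlinarith

theorem sum_Icc_one_eq_sum_range_succ {M : Type*} [AddCommMonoid M] (f : ℕ → M) (n : ℕ) :
    ∑ k ∈ Icc 1 n, f k = ∑ k ∈ range n, f (k + 1) := by
  induction n with
  | zero => simp
  | succ n ih => rw [sum_Icc_succ_top (by omega), ih, sum_range_succ]

theorem segmenting_iterate_succ {E : Type*} [AddCommGroup E] [Module ℝ E] (T : E → E)
    (a : ℕ → ℕ → ℝ)
    (hseg : ∀ i, 1 ≤ i → ∀ j, 1 ≤ j → j ≤ i →
      a (i + 1) j = (1 - a (i + 1) (i + 1)) * a i j)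
    (φ ϕ : ℕ → E)
    (hϕ : ∀ k, 1 ≤ k → ϕ k = ∑ j ∈ Icc 1 k, a k j • φ j)
    (hφ : ∀ k, 1 ≤ k → φ (k + 1) = T (ϕ k)) {k : ℕ} (hk : 1 ≤ k) :
    ϕ (k + 1) = (1 - a (k + 1) (k + 1)) • ϕ k + a (k + 1) (k + 1) • T (ϕ k) := by
  have hhead : ∀ j ∈ Icc 1 k, a (k + 1) j • φ j = (1 - a (k + 1) (k + 1)) • (a k j • φ j) := by
    intro j hj
    obtain ⟨hj1, hjk⟩ := mem_Icc.mp hj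
    rw [hseg k hk j hj1 hjk, mul_smul]
  rw [hϕ (k + 1) (by omega), sum_Icc_succ_top (by omega), sum_congr rfl hhead, ← smul_sum,
    ← hϕ k hk, hφ k hk]

section MannIteration

variable {H : Type*} [NormedAddCommGroup H] [InnerProductSpace ℝ H] {T : H → H}

theorem mul_one_sub_mul_norm_sub_sq_le (hT : ∀ y, ‖T y‖ ≤ ‖y‖) (x : H) {t : ℝ} (ht : 0 ≤ t) :
    t * (1 - t) * ‖x - T x‖ ^ 2 ≤ ‖x‖ ^ 2 - ‖(1 - t) • x + t • T x‖ ^ 2 := by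
  have hTx : ‖T x‖ ^ 2 ≤ ‖x‖ ^ 2 := pow_le_pow_left₀ (norm_nonneg _) (hT x) 2
  rw [norm_one_sub_smul_add_smul_sq]
  nlinarith [mul_le_mul_of_nonneg_left hTx ht]

variable {t : ℕ → ℝ} {x : ℕ → H}

theorem summable_mul_one_sub_mul_norm_sub_sq_of_mann (hT : ∀ y, ‖T y‖ ≤ ‖y‖)
    (ht : ∀ k, t k ∈ Set.Icc (0 : ℝ) 1)
    (hx : ∀ k, x (k + 1) = (1 - t k) • x k + t k • T (x k)) :
    Summable fun k => t k * (1 - t k) * ‖x k - T (x k)‖ ^ 2 := by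
  refine summable_of_sum_range_le (c := ‖x 0‖ ^ 2) (fun k => ?_) (fun n => ?_)
  · obtain ⟨ht0, ht1⟩ := ht k
    have : 0 ≤ 1 - t k := by linarith
    positivity
  · calc ∑ k ∈ range n, t k * (1 - t k) * ‖x k - T (x k)‖ ^ 2
        ≤ ∑ k ∈ range n, (‖x k‖ ^ 2 - ‖x (k + 1)‖ ^ 2) := by
          gcongr with k
          rw [hx k]
          exact mul_one_sub_mul_norm_sub_sq_le hT (x k) (ht k).1
      _ = ‖x 0‖ ^ 2 - ‖x n‖ ^ 2 := sum_range_sub' (fun k => ‖x k‖ ^ 2) n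
      _ ≤ ‖x 0‖ ^ 2 := sub_le_self _ (sq_nonneg _)

theorem mapClusterPt_zero_sub_of_mann (hT : ∀ y, ‖T y‖ ≤ ‖y‖)
    (ht : ∀ k, t k ∈ Set.Icc (0 : ℝ) 1)
    (hdiv : ¬Summable fun k => min (t k) (1 - t k))
    (hx : ∀ k, x (k + 1) = (1 - t k) • x k + t k • T (x k)) :
    MapClusterPt 0 atTop fun k => x k - T (x k) := by
  rw [Metric.nhds_basis_ball.mapClusterPt_iff_frequently]
  intro ε hε
  by_contra hfar
  refine hdiv (((summable_mul_one_sub_mul_norm_sub_sq_of_mann hT ht hx).mul_left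
    (2 / ε ^ 2)).of_norm_bounded_eventually_nat ?_)
  filter_upwards [not_frequently.mp hfar] with k hk
  have hεk : ε ^ 2 ≤ ‖x k - T (x k)‖ ^ 2 :=
    pow_le_pow_left₀ hε.le (not_lt.mp (by simpa only [mem_ball_zero_iff] using hk)) 2
  obtain ⟨ht0, ht1⟩ := ht k
  have hmin : 0 ≤ min (t k) (1 - t k) := le_min ht0 (by linarith)
  calc ‖min (t k) (1 - t k)‖ ≤ 2 * (t k * (1 - t k)) := by
        rw [Real.norm_of_nonneg hmin]; exact min_le_two_mul_mul_one_sub (ht k)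
    _ = 2 / ε ^ 2 * (t k * (1 - t k) * ε ^ 2) := by field_simp
    _ ≤ 2 / ε ^ 2 * (t k * (1 - t k) * ‖x k - T (x k)‖ ^ 2) := by
        gcongr

end MannIteration

theorem mann_subsequence_asymptotic_regularity_general
    {H : Type*} [NormedAddCommGroup H] [InnerProductSpace ℝ H]
    (T : H → H) (hTnorm : ∀ φ : H, ‖T φ‖ ≤ ‖φ‖)
    (a : ℕ → ℕ → ℝ)
    (hseg : ∀ i, 1 ≤ i → ∀ j, 1 ≤ j → j ≤ i →
      a (i + 1) j = (1 - a (i + 1) (i + 1)) * a i j)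
    (d : ℕ → ℝ) (hd : ∀ k, d k = a (k + 1) (k + 1))
    (hd01 : ∀ k, 0 ≤ d k ∧ d k ≤ 1)
    (hdiv : Tendsto (fun n => ∑ k ∈ Finset.Icc 1 n, min (d k) (1 - d k))
      atTop atTop)
    (φ ϕ : ℕ → H)
    (hϕ : ∀ k, 1 ≤ k → ϕ k = ∑ j ∈ Finset.Icc 1 k, a k j • φ j)
    (hφ : ∀ k, 1 ≤ k → φ (k + 1) = T (ϕ k)) :
    ∃ k : ℕ → ℕ, StrictMono k ∧ (∀ j, 1 ≤ k j) ∧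
      Tendsto (fun j => ϕ (k j) - T (ϕ (k j))) atTop (nhds 0) := by
  have hmann : ∀ k, ϕ (k + 1 + 1) = (1 - d (k + 1)) • ϕ (k + 1) + d (k + 1) • T (ϕ (k + 1)) :=
    fun k => hd (k + 1) ▸ segmenting_iterate_succ T a hseg φ ϕ hϕ hφ (Nat.le_add_left 1 k)
  have hnotsum : ¬Summable fun k => min (d (k + 1)) (1 - d (k + 1)) := by
    rw [not_summable_iff_tendsto_nat_atTop_of_nonneg
      fun k => le_min (hd01 (k + 1)).1 (sub_nonneg.mpr (hd01 (k + 1)).2)]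
    simpa only [sum_Icc_one_eq_sum_range_succ] using hdiv
  obtain ⟨ψ, hψ, hlim⟩ :=
    (mapClusterPt_zero_sub_of_mann (x := fun k => ϕ (k + 1)) hTnorm (fun k => hd01 (k + 1))
      hnotsum hmann).tendsto_subseq
  exact ⟨fun j => ψ j + 1, fun i j hij => Nat.succ_lt_succ (hψ hij), fun j => Nat.le_add_left 1 _,
    hlim⟩

/-- for the segmenting Mann iteration of a continuous map `T`
with `‖T φ‖ ≤ ‖φ‖`, some subsequence of `(I - T) φ_k` tends to zero. -/
theorem mann_subsequence_asymptotic_regularity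
    {H : Type*} [NormedAddCommGroup H] [InnerProductSpace ℝ H] [CompleteSpace H]
    (T : H → H) (hTcont : Continuous T) (hTnorm : ∀ φ : H, ‖T φ‖ ≤ ‖φ‖)
    (a : ℕ → ℕ → ℝ)
    (hnonneg : ∀ i j, 0 ≤ a i j)
    (htri : ∀ i j, i < j → a i j = 0)
    (hrow : ∀ i, 1 ≤ i → ∑ j ∈ Finset.Icc 1 i, a i j = 1)
    (hseg : ∀ i, 1 ≤ i → ∀ j, 1 ≤ j → j ≤ i →
      a (i + 1) j = (1 - a (i + 1) (i + 1)) * a i j)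
    (d : ℕ → ℝ) (hd : ∀ k, d k = a (k + 1) (k + 1))
    (hd01 : ∀ k, 0 ≤ d k ∧ d k ≤ 1)
    (hdiv : Tendsto (fun n => ∑ k ∈ Finset.Icc 1 n, min (d k) (1 - d k))
      atTop atTop)
    (φ ϕ : ℕ → H)
    (hϕ : ∀ k, 1 ≤ k → ϕ k = ∑ j ∈ Finset.Icc 1 k, a k j • φ j)
    (hφ : ∀ k, 1 ≤ k → φ (k + 1) = T (ϕ k)) :
    ∃ k : ℕ → ℕ, StrictMono k ∧ (∀ j, 1 ≤ k j) ∧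
      Tendsto (fun j => ϕ (k j) - T (ϕ (k j))) atTop (nhds 0) :=
  mann_subsequence_asymptotic_regularity_general T hTnorm a hseg d hd hd01 hdiv φ ϕ hϕ hφ
end
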